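/- arXiv:1703.05557 — 4 statements merged into one kernel-verified Lean document; each statement's English description precedes it below -/
import Mathlib

section
/- For every exponent q with 2 < q ≤ 4 there exists a finite constant D_q > 0 such that for all real u ≥ 0 and v ∈ ℝ one has |u+v|^{q/2} ≤ u^{q/2} + (q/2)·v·u^{q/2 - 1} + D_q·|v|^{q/2}. -/
/-! Put `p = q / 2 ∈ (1, 2]`. By homogeneity it suffices to take `u = 1`, i.e. to bound
`|1 + x| ^ p - 1 - p * x`. For `x ≥ -1` the difference `1 + p * x + |x| ^ p - (1 + x) ^ p`
vanishes at `0`, increases on `[0, ∞)` and decreases on `[-1, 0]`: the sign of its derivative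
comes from the subadditivity of `t ↦ t ^ (p - 1)`, whose exponent lies in `(0, 1]`.
For `x < -1` one has `|1 + x| ≤ |x| ≤ |x| ^ p`, which costs an extra `p * |x| ^ p`. -/

open Real Set

section
variable {p : ℝ}

lemma one_add_rpow_le (hp1 : 1 < p) (hp2 : p ≤ 2) {x : ℝ} (hx : 0 ≤ x) :
    (1 + x) ^ p ≤ 1 + p * x + x ^ p := by
  let g : ℝ → ℝ := fun x => 1 + p * x + x ^ p - (1 + x) ^ p
  have hcont : Continuous g := by
    have := continuous_rpow_const (q := p) (by linarith)
    fun_prop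
  have hderiv : ∀ y ∈ interior (Ici (0 : ℝ)), HasDerivWithinAt g
      (p + p * y ^ (p - 1) - p * (1 + y) ^ (p - 1)) (interior (Ici 0)) y := by
    intro y hy
    rw [interior_Ici, mem_Ioi] at hy
    have h := ((((hasDerivAt_id' y).const_mul p).const_add 1).add
      (hasDerivAt_rpow_const (p := p) (Or.inl hy.ne'))).sub
      ((hasDerivAt_rpow_const (p := p) (Or.inl (by positivity))).comp_const_add 1 y)
    exact (h.congr_deriv (by ring)).hasDerivWithinAt
  have hmono : MonotoneOn g (Ici 0) := by
    refine monotoneOn_of_hasDerivWithinAt_nonneg (convex_Ici 0) hcont.continuousOn hderiv ?_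
    intro y hy
    rw [interior_Ici, mem_Ioi] at hy
    have hsub := rpow_add_le_add_rpow zero_le_one hy.le (p := p - 1) (by linarith) (by linarith)
    rw [one_rpow] at hsub
    nlinarith
  have hg := hmono self_mem_Ici hx hx
  simp only [g, mul_zero, add_zero, zero_rpow (by linarith : p ≠ 0), one_rpow, sub_self] at hg
  linarith

lemma one_sub_rpow_le (hp1 : 1 < p) (hp2 : p ≤ 2) {w : ℝ} (hw0 : 0 ≤ w) (hw1 : w ≤ 1) :
    (1 - w) ^ p ≤ 1 - p * w + w ^ p := by
  let g : ℝ → ℝ := fun w => 1 - p * w + w ^ p - (1 - w) ^ p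
  have hcont : Continuous g := by
    have := continuous_rpow_const (q := p) (by linarith)
    fun_prop
  have hderiv : ∀ y ∈ interior (Icc (0 : ℝ) 1), HasDerivWithinAt g
      (-p + p * y ^ (p - 1) + p * (1 - y) ^ (p - 1)) (interior (Icc 0 1)) y := by
    intro y hy
    rw [interior_Icc] at hy
    have h := ((((hasDerivAt_id' y).const_mul p).const_sub 1).add
      (hasDerivAt_rpow_const (p := p) (Or.inl hy.1.ne'))).sub
      ((hasDerivAt_rpow_const (p := p) (Or.inl (sub_pos.2 hy.2).ne')).comp_const_sub 1 y)
    exact (h.congr_deriv (by ring)).hasDerivWithinAt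
  have hmono : MonotoneOn g (Icc 0 1) := by
    refine monotoneOn_of_hasDerivWithinAt_nonneg (convex_Icc 0 1) hcont.continuousOn hderiv ?_
    intro y hy
    rw [interior_Icc] at hy
    have hsub := rpow_add_le_add_rpow hy.1.le (sub_nonneg.2 hy.2.le) (p := p - 1) (by linarith)
      (by linarith)
    rw [add_sub_cancel, one_rpow] at hsub
    nlinarith
  have hg := hmono ⟨le_rfl, zero_le_one⟩ ⟨hw0, hw1⟩ hw0
  simp only [g, mul_zero, sub_zero, zero_rpow (by linarith : p ≠ 0), one_rpow, add_zero,
    sub_self] at hg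
  linarith

lemma one_add_rpow_le_of_neg_one_le (hp1 : 1 < p) (hp2 : p ≤ 2) {x : ℝ} (hx : -1 ≤ x) :
    (1 + x) ^ p ≤ 1 + p * x + |x| ^ p := by
  rcases le_or_gt 0 x with hx0 | hx0
  · rw [abs_of_nonneg hx0]
    exact one_add_rpow_le hp1 hp2 hx0
  · rw [abs_of_neg hx0]
    simpa [sub_eq_add_neg] using one_sub_rpow_le hp1 hp2 (neg_nonneg.2 hx0.le) (neg_le.1 hx)

lemma abs_one_add_rpow_le (hp1 : 1 < p) (hp2 : p ≤ 2) (x : ℝ) :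
    |1 + x| ^ p ≤ 1 + p * x + (1 + p) * |x| ^ p := by
  have hxp : 0 ≤ |x| ^ p := by positivity
  rcases le_or_gt (-1) x with hx | hx
  · rw [abs_of_nonneg (by linarith : 0 ≤ 1 + x)]
    nlinarith [one_add_rpow_le_of_neg_one_le hp1 hp2 hx]
  · have hax : |x| = -x := abs_of_neg (by linarith)
    have hle : |1 + x| ^ p ≤ |x| ^ p := by
      refine rpow_le_rpow (abs_nonneg _) ?_ (by linarith)
      rw [abs_of_neg (by linarith), hax]
      linarith
    have habs : |x| ≤ |x| ^ p := self_le_rpow_of_one_le (by linarith) hp1.le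
    nlinarith

lemma abs_add_rpow_le (hp1 : 1 < p) (hp2 : p ≤ 2) {u : ℝ} (hu : 0 ≤ u) (v : ℝ) :
    |u + v| ^ p ≤ u ^ p + p * v * u ^ (p - 1) + (1 + p) * |v| ^ p := by
  rcases hu.eq_or_lt with rfl | hu
  · rw [zero_add, zero_rpow (by linarith), zero_rpow (by linarith)]
    nlinarith [rpow_nonneg (abs_nonneg v) p]
  obtain ⟨x, rfl⟩ : ∃ x, v = u * x := ⟨v / u, by field_simp⟩
  have hup : u ^ p = u * u ^ (p - 1) := by
    rw [← rpow_one_add' hu.le (by linarith)]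
    ring_nf
  calc |u + u * x| ^ p = u ^ p * |1 + x| ^ p := by
        rw [← mul_one_add, abs_mul, abs_of_pos hu, mul_rpow hu.le (abs_nonneg _)]
    _ ≤ u ^ p * (1 + p * x + (1 + p) * |x| ^ p) :=
        mul_le_mul_of_nonneg_left (abs_one_add_rpow_le hp1 hp2 x) (by positivity)
    _ = u ^ p + p * (u * x) * u ^ (p - 1) + (1 + p) * |u * x| ^ p := by
        rw [abs_mul, mul_rpow (abs_nonneg _) (abs_nonneg _), abs_of_pos hu, hup]
        ring

end

theorem stmt_0 (q : ℝ) (hq : 2 < q) (hq4 : q ≤ 4) :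
    ∃ D : ℝ, 0 < D ∧ ∀ u v : ℝ, 0 ≤ u →
      |u + v| ^ (q / 2) ≤ u ^ (q / 2) + (q / 2) * v * u ^ (q / 2 - 1) + D * |v| ^ (q / 2) :=
  ⟨1 + q / 2, by linarith, fun _ v hu => abs_add_rpow_le (by linarith) (by linarith) hu v⟩
end

section
/- Let f : ℝ → ℂ be integrable with the Dirac scattering solution (a(·,ξ), b(·,ξ)) as above. Then for every x ∈ ℝ and ξ ∈ ℝ: |b(x,ξ)| + |a(x,ξ) − 1| ≤ exp(∫_{−∞}^x |f|) − 1, and in particular sup_ξ |b(ξ)| ≤ exp(‖f‖_{L^1}) − 1; consequently (log |a(ξ)|²)^{1/2} ≤ ‖f‖_{L^1(ℝ)}, which follows from the identity |a|²−|b|²=1 via the sharper bound ‖log(|a(ξ)|+|b(ξ)|)‖_{L^∞_ξ} ≤ ‖f‖_{L^1}. -/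
open MeasureTheory Filter

open Set in

lemma my_cosh_le {x : ℝ} (hx : 0 ≤ x) : Real.cosh x ≤ Real.exp (x ^ 2 / 2) := by
  have hG : ∀ y : ℝ, 0 ≤ y → Real.sinh y ≤ y * Real.cosh y := by
    have hd : ∀ y : ℝ, HasDerivAt (fun y => y * Real.cosh y - Real.sinh y)
        (y * Real.sinh y) y := by
      intro y
      have h1 := (hasDerivAt_id y).mul (Real.hasDerivAt_cosh y)
      have h2 := h1.sub (Real.hasDerivAt_sinh y)
      refine h2.congr_deriv ?_
      simp only [id]
      ring
    have hm : MonotoneOn (fun y => y * Real.cosh y - Real.sinh y) (Ici (0:ℝ)) := by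
      apply monotoneOn_of_deriv_nonneg (convex_Ici 0)
      · exact (Continuous.continuousOn (by continuity))
      · exact fun y _ => (hd y).differentiableAt.differentiableWithinAt
      · intro y hy
        rw [(hd y).deriv]
        rw [interior_Ici] at hy
        exact mul_nonneg (le_of_lt hy) (Real.sinh_nonneg_iff.mpr (le_of_lt hy))
    intro y hy
    have := hm (self_mem_Ici) hy hy
    simp at this
    linarith
  have hd : ∀ y : ℝ, HasDerivAt (fun y => 1 - Real.cosh y * Real.exp (-(y^2/2)))
      ((y * Real.cosh y - Real.sinh y) * Real.exp (-(y^2/2))) y := by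
    intro y
    have h1 : HasDerivAt (fun y : ℝ => -(y^2/2)) (-y) y := by
      have := ((hasDerivAt_pow 2 y).div_const 2).neg
      refine this.congr_deriv ?_; ring
    have h2 := h1.exp
    have h3 := (Real.hasDerivAt_cosh y).mul h2
    have h4 := (hasDerivAt_const y (1:ℝ)).sub h3
    refine h4.congr_deriv ?_; ring
  have hm : MonotoneOn (fun y => 1 - Real.cosh y * Real.exp (-(y^2/2))) (Ici (0:ℝ)) := by
    apply monotoneOn_of_deriv_nonneg (convex_Ici 0)
    · exact (Continuous.continuousOn (by continuity))
    · exact fun y _ => (hd y).differentiableAt.differentiableWithinAt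
    · intro y hy
      rw [(hd y).deriv]
      rw [interior_Ici] at hy
      have := hG y (le_of_lt hy)
      have := Real.exp_pos (-(y^2/2))
      nlinarith
  have h0 := hm self_mem_Ici hx hx
  simp [Real.cosh_zero] at h0
  have hep : 0 < Real.exp (-(x^2/2)) := Real.exp_pos _
  have : Real.cosh x * Real.exp (-(x^2/2)) ≤ 1 := by linarith
  rw [Real.exp_neg] at this
  have hep2 := Real.exp_pos (x^2/2)
  have hinv : (Real.exp (x^2/2))⁻¹ * Real.exp (x^2/2) = 1 := inv_mul_cancel₀ (ne_of_gt hep2)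
  nlinarith [mul_le_mul_of_nonneg_right this hep2.le]

open Set in

lemma my_gronwall (f : ℝ → ℂ) (hf : Integrable f) (u : ℝ → ℝ)
    (hu0 : ∀ t, 0 ≤ u t)
    (huint : ∀ x : ℝ, IntegrableOn (fun t => ‖f t‖ * u t) (Set.Iic x))
    (hule : ∀ x : ℝ, u x ≤ 1 + ∫ t in Set.Iic x, ‖f t‖ * u t) :
    ∀ x : ℝ, u x ≤ Real.exp (∫ t in Set.Iic x, ‖f t‖) := by
  set F : ℝ → ℝ := fun x => ∫ t in Set.Iic x, ‖f t‖ with hF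
  set ψ : ℝ → ℝ := fun x => ∫ t in Set.Iic x, ‖f t‖ * u t with hψ
  have hFint : ∀ x : ℝ, IntegrableOn (fun t => ‖f t‖) (Set.Iic x) :=
    fun x => hf.norm.integrableOn
  have hF0 : ∀ x, 0 ≤ F x := fun x =>
    setIntegral_nonneg measurableSet_Iic (fun t _ => norm_nonneg _)
  have hψ0 : ∀ x, 0 ≤ ψ x := fun x =>
    setIntegral_nonneg measurableSet_Iic (fun t _ => mul_nonneg (norm_nonneg _) (hu0 t))
  have hFmono : Monotone F := by
    intro x y hxy
    exact setIntegral_mono_set (hFint y) (Eventually.of_forall (fun t => norm_nonneg _))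
      ((Iic_subset_Iic.2 hxy).eventuallyLE)
  have hψmono : Monotone ψ := by
    intro x y hxy
    exact setIntegral_mono_set (huint y)
      (Eventually.of_forall (fun t => mul_nonneg (norm_nonneg _) (hu0 t)))
      ((Iic_subset_Iic.2 hxy).eventuallyLE)
  have hFsplit : ∀ x y : ℝ, x ≤ y → F y - F x = ∫ t in Ioc x y, ‖f t‖ := by
    intro x y hxy
    rw [intervalIntegral.integral_Iic_sub_Iic (hFint x) (hFint y)]
    exact intervalIntegral.integral_of_le hxy
  have hψsplit : ∀ x y : ℝ, x ≤ y → ψ y - ψ x = ∫ t in Ioc x y, ‖f t‖ * u t := by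
    intro x y hxy
    rw [intervalIntegral.integral_Iic_sub_Iic (huint x) (huint y)]
    exact intervalIntegral.integral_of_le hxy
  have key : ∀ x y : ℝ, x ≤ y → ψ y ≤ ψ x + (F y - F x) * (1 + ψ y) := by
    intro x y hxy
    have h1 : ∫ t in Ioc x y, ‖f t‖ * u t ≤ ∫ t in Ioc x y, ‖f t‖ * (1 + ψ y) := by
      apply setIntegral_mono_on
      · exact (huint y).mono_set Ioc_subset_Iic_self
      · exact ((hFint y).mono_set Ioc_subset_Iic_self).mul_const _
      · exact measurableSet_Ioc
      · intro t ht
        have hut : u t ≤ 1 + ψ t := hule t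
        have hψt : ψ t ≤ ψ y := hψmono ht.2
        exact mul_le_mul_of_nonneg_left (by linarith) (norm_nonneg _)
    have h2 : ∫ t in Ioc x y, ‖f t‖ * (1 + ψ y) = (F y - F x) * (1 + ψ y) := by
      rw [integral_mul_const, hFsplit x y hxy]
    have h3 := hψsplit x y hxy
    linarith [h2 ▸ h1]
  have base : ∀ x : ℝ, ψ x ≤ F x * (1 + ψ x) := by
    intro x
    have h1 : ψ x ≤ ∫ t in Set.Iic x, ‖f t‖ * (1 + ψ x) := by
      apply setIntegral_mono_on (huint x) ((hFint x).mul_const _) measurableSet_Iic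
      intro t ht
      have hut : u t ≤ 1 + ψ t := hule t
      have hψt : ψ t ≤ ψ x := hψmono ht
      exact mul_le_mul_of_nonneg_left (by linarith) (norm_nonneg _)
    rw [integral_mul_const] at h1
    exact h1
  have hFcont : Continuous F := by
    have h1 : ∀ x : ℝ, F x = F 0 + ∫ t in (0:ℝ)..x, ‖f t‖ := by
      intro x
      rw [← intervalIntegral.integral_Iic_sub_Iic (hFint 0) (hFint x)]
      ring
    have h2 : Continuous fun x : ℝ => F 0 + ∫ t in (0:ℝ)..x, ‖f t‖ :=
      continuous_const.add (intervalIntegral.continuous_primitive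
        (fun a b => hf.norm.intervalIntegrable) 0)
    exact h2.congr (fun x => (h1 x).symm)
  have hFbot : Tendsto F atBot (nhds 0) := by
    have h1 := MeasureTheory.intervalIntegral_tendsto_integral_Iic (μ := volume) (0:ℝ)
      (hFint 0) tendsto_id
    have h3 : Tendsto (fun y : ℝ => F 0 - F y) atBot (nhds (F 0)) := by
      refine h1.congr (fun y => ?_)
      show (∫ x in y..(0:ℝ), ‖f x‖) = F 0 - F y
      rw [← intervalIntegral.integral_Iic_sub_Iic (hFint y) (hFint 0)]
    have h4 := (tendsto_const_nhds (x := F 0) (f := atBot)).sub h3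
    simpa using h4
  intro x₀
  set N := F x₀ with hN
  rcases eq_or_lt_of_le (hF0 x₀) with hN0 | hN0
  · have hb := base x₀
    rw [← hN0] at hb
    simp only [zero_mul] at hb
    have h1 : u x₀ ≤ 1 := by linarith [hule x₀, hψ0 x₀]
    have h2 : (1:ℝ) ≤ Real.exp (F x₀) := Real.one_le_exp (hF0 x₀)
    exact le_trans h1 h2
  have hIVT : ∀ s : ℝ, 0 < s → s ≤ N → ∃ y, y ≤ x₀ ∧ F y = s := by
    intro s hs0 hsN
    obtain ⟨c, hc⟩ := (hFbot.eventually_lt_const hs0).exists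
    have hc' : F (min c x₀) < s := lt_of_le_of_lt (hFmono (min_le_left c x₀)) hc
    obtain ⟨y, hy, hFy⟩ := intermediate_value_Icc (min_le_right c x₀) hFcont.continuousOn
      ⟨le_of_lt hc', hsN⟩
    exact ⟨y, hy.2, hFy⟩
  have main : ∀ m : ℕ, N < (m : ℝ) → u x₀ ≤ ((1 - N / m) ^ m)⁻¹ := by
    intro m hm
    have hm0 : 0 < (m : ℝ) := lt_of_le_of_lt (hF0 x₀) hm
    have hmnat : 0 < m := by exact_mod_cast hm0
    have hm1r : (1:ℝ) ≤ (m:ℝ) := by exact_mod_cast hmnat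
    set ε := N / (m:ℝ) with hε
    have hε0 : 0 < ε := div_pos hN0 hm0
    have hε1 : ε < 1 := (div_lt_one hm0).mpr hm
    have hεN : ε ≤ N := div_le_self (le_of_lt hN0) hm1r
    set p := 1 - ε with hp
    have hp0 : 0 < p := by rw [hp]; linarith
    have claim : ∀ i : ℕ, 1 ≤ i → (i : ℝ) ≤ (m:ℝ) → ∃ y, y ≤ x₀ ∧ F y = i * ε ∧
        1 + ψ y ≤ (p⁻¹) ^ i := by
      intro i
      induction i with
      | zero => intro h; exact absurd h (by norm_num)
      | succ n ih =>
        intro _ hle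
        by_cases hn : n = 0
        · subst hn
          obtain ⟨y, hy, hFy⟩ := hIVT ε hε0 hεN
          refine ⟨y, hy, by push_cast; simpa using hFy, ?_⟩
          have hb := base y
          rw [hFy] at hb
          have h1 : (1 + ψ y) * p ≤ 1 := by rw [hp]; nlinarith
          rw [pow_one, inv_eq_one_div, le_div_iff₀ hp0]
          exact h1
        · have hn1 : 1 ≤ n := Nat.one_le_iff_ne_zero.mpr hn
          obtain ⟨y, hy, hFy, hψy⟩ := ih hn1 (by push_cast at hle ⊢; linarith)
          have hs0 : (0:ℝ) < ((n:ℝ)+1) * ε := by positivity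
          have hsN : ((n:ℝ)+1) * ε ≤ N := by
            have hle' : ((n:ℝ)+1) ≤ (m:ℝ) := by push_cast at hle; linarith
            have : ((n:ℝ)+1) * ε ≤ (m:ℝ) * ε := by nlinarith
            calc ((n:ℝ)+1) * ε ≤ (m:ℝ) * ε := this
            _ = N := by rw [hε]; field_simp
          obtain ⟨y', hy', hFy'⟩ := hIVT (((n:ℝ)+1) * ε) hs0 hsN
          have hyy' : y ≤ y' := by
            by_contra hcon
            push_neg at hcon
            have hmono := hFmono (le_of_lt hcon)
            rw [hFy, hFy'] at hmono
            push_cast at hmono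
            nlinarith
          have hk := key y y' hyy'
          rw [hFy, hFy'] at hk
          have hdiff : ((n:ℝ)+1) * ε - (n:ℝ) * ε = ε := by ring
          push_cast at hk
          rw [hdiff] at hk
          refine ⟨y', hy', by push_cast; linarith [hFy'], ?_⟩
          have hstep : (1 + ψ y') * p ≤ 1 + ψ y := by rw [hp]; nlinarith
          have h2 : 1 + ψ y' ≤ (1 + ψ y) / p := by
            rw [le_div_iff₀ hp0]; exact hstep
          calc 1 + ψ y' ≤ (1 + ψ y) / p := h2
          _ ≤ (p⁻¹)^n / p := by gcongr
          _ = (p⁻¹)^(n+1) := by rw [pow_succ]; field_simp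
    have hm1 : 1 ≤ m := hmnat
    obtain ⟨y, hy, hFy, hψy⟩ := claim m hm1 le_rfl
    have hFyN : F y = N := by rw [hFy, hε]; field_simp
    have hk := key y x₀ hy
    rw [hFyN, ← hN] at hk
    simp only [sub_self, zero_mul, add_zero] at hk
    have h3 : u x₀ ≤ 1 + ψ x₀ := hule x₀
    have hfin : u x₀ ≤ p⁻¹ ^ m := by linarith
    calc u x₀ ≤ p⁻¹ ^ m := hfin
    _ = ((1 - N / m) ^ m)⁻¹ := by rw [inv_pow]
  have hlim : Tendsto (fun m : ℕ => ((1 - N / m) ^ m)⁻¹) atTop (nhds (Real.exp N)) := by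
    have h1 := Real.tendsto_one_add_div_pow_exp (-N)
    have h2 : Tendsto (fun m : ℕ => ((1 + -N / m) ^ m)⁻¹) atTop (nhds (Real.exp (-N))⁻¹) :=
      h1.inv₀ (ne_of_gt (Real.exp_pos _))
    rw [← Real.exp_neg, neg_neg] at h2
    refine h2.congr (fun m => ?_)
    congr 2
    ring
  refine ge_of_tendsto hlim ?_
  filter_upwards [eventually_gt_atTop ⌈N⌉₊] with m hm
  exact main m (lt_of_le_of_lt (Nat.le_ceil N) (by exact_mod_cast hm))

open Set in

-- bound on Iic for continuous function with limit at -∞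
lemma my_bdd {u : ℝ → ℂ} (hu : Continuous u) {c : ℂ} (h0 : Tendsto u atBot (nhds c)) (x : ℝ) :
    ∃ C : ℝ, 0 ≤ C ∧ ∀ t ≤ x, ‖u t‖ ≤ C := by
  have h1 : Tendsto (fun t => ‖u t‖) atBot (nhds ‖c‖) := h0.norm
  obtain ⟨c₀, hc₀⟩ := (eventually_atBot.mp (h1.eventually_lt_const (lt_add_one ‖c‖)))
  obtain ⟨C, hC⟩ := (isCompact_Icc (a := min c₀ x) (b := x)).exists_bound_of_continuousOn
    hu.norm.continuousOn
  refine ⟨max (‖c‖ + 1) (max C 0), le_max_of_le_right (le_max_right _ _), ?_⟩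
  intro t ht
  rcases le_or_gt t c₀ with h | h
  · exact le_max_of_le_left (le_of_lt (hc₀ t h))
  · have : t ∈ Icc (min c₀ x) x := ⟨le_trans (min_le_left _ _) (le_of_lt h), ht⟩
    exact le_max_of_le_right (le_max_of_le_left (by simpa using hC t this))

lemma my_rep (f : ℝ → ℂ) (hf : Integrable f) (u D : ℝ → ℂ) (c : ℂ)
    (hu : ∀ x, HasDerivAt u (D x) x)
    (hD : AEStronglyMeasurable D volume)
    (hC : ∀ x : ℝ, ∃ C : ℝ, 0 ≤ C ∧ ∀ t ≤ x, ‖D t‖ ≤ C * ‖f t‖)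
    (hu0 : Tendsto u atBot (nhds c)) :
    (∀ x : ℝ, IntegrableOn D (Set.Iic x)) ∧
      ∀ x : ℝ, u x = c + ∫ t in Set.Iic x, D t := by
  have hDint : ∀ x : ℝ, IntegrableOn D (Set.Iic x) := by
    intro x
    obtain ⟨C, hC0, hCb⟩ := hC x
    refine Integrable.mono ((hf.norm.const_mul C).integrableOn) (hD.restrict) ?_
    rw [ae_restrict_iff' measurableSet_Iic]
    refine Eventually.of_forall (fun t ht => ?_)
    calc ‖D t‖ ≤ C * ‖f t‖ := hCb t ht
    _ ≤ ‖C * ‖f t‖‖ := le_abs_self _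
  refine ⟨hDint, fun x => ?_⟩
  have hII : ∀ y : ℝ, IntervalIntegrable D volume y x := by
    intro y
    rw [intervalIntegrable_iff]
    exact (hDint (max y x)).mono_set (fun t ht => ht.2)
  have h1 : ∀ y : ℝ, (∫ t in y..x, D t) = u x - u y := by
    intro y
    exact intervalIntegral.integral_eq_sub_of_hasDerivAt (fun t _ => hu t) (hII y)
  have h2 : Tendsto (fun y : ℝ => ∫ t in y..x, D t) atBot (nhds (∫ t in Set.Iic x, D t)) :=
    MeasureTheory.intervalIntegral_tendsto_integral_Iic x (hDint x) tendsto_id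
  have h3 : Tendsto (fun y : ℝ => u x - u y) atBot (nhds (u x - c)) :=
    tendsto_const_nhds.sub hu0
  have h4 : u x - c = ∫ t in Set.Iic x, D t :=
    tendsto_nhds_unique h3 (h2.congr (fun y => h1 y))
  linear_combination h4

open Set in
theorem stmt_12 (f : ℝ → ℂ) (a b : ℝ → ℝ → ℂ) (A B : ℝ → ℂ)
    (hf : Integrable f)
    (ha : ∀ ξ x : ℝ, HasDerivAt (fun t => a t ξ)
      ((starRingEnd ℂ) (f x) * Complex.exp (2 * Real.pi * Complex.I * x * ξ) * b x ξ) x)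
    (hb : ∀ ξ x : ℝ, HasDerivAt (fun t => b t ξ)
      (f x * Complex.exp (-(2 * Real.pi * Complex.I * x * ξ)) * a x ξ) x)
    (ha0 : ∀ ξ : ℝ, Tendsto (fun t => a t ξ) atBot (nhds 1))
    (hb0 : ∀ ξ : ℝ, Tendsto (fun t => b t ξ) atBot (nhds 0))
    (haA : ∀ ξ : ℝ, Tendsto (fun t => a t ξ) atTop (nhds (A ξ)))
    (hbB : ∀ ξ : ℝ, Tendsto (fun t => b t ξ) atTop (nhds (B ξ))) :
    (∀ x ξ : ℝ, ‖b x ξ‖ + ‖a x ξ - 1‖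
        ≤ Real.exp (∫ t in Set.Iic x, ‖f t‖) - 1) ∧
      (∀ ξ : ℝ, ‖B ξ‖ ≤ Real.exp (∫ t : ℝ, ‖f t‖) - 1) ∧
      (∀ ξ : ℝ, Real.log (‖A ξ‖ + ‖B ξ‖) ≤ ∫ t : ℝ, ‖f t‖) ∧
      (∀ ξ : ℝ, Real.sqrt (Real.log (‖A ξ‖ ^ 2)) ≤ ∫ t : ℝ, ‖f t‖) := by
  have hN0 : (0:ℝ) ≤ ∫ t : ℝ, ‖f t‖ := integral_nonneg (fun t => norm_nonneg _)
  set N := ∫ t : ℝ, ‖f t‖ with hNdef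
  have hFleN : ∀ x : ℝ, (∫ t in Set.Iic x, ‖f t‖) ≤ N := fun x =>
    setIntegral_le_integral hf.norm (Eventually.of_forall (fun t => norm_nonneg _))
  -- per-ξ facts
  have key : ∀ ξ : ℝ,
      (∀ x : ℝ, ‖b x ξ‖ + ‖a x ξ - 1‖ ≤ Real.exp (∫ t in Set.Iic x, ‖f t‖) - 1) ∧
      (‖A ξ‖ + ‖B ξ‖ ≤ Real.exp N) ∧
      (‖A ξ‖^2 - ‖B ξ‖^2 = 1) := by
    intro ξ
    have hacont : Continuous (fun t => a t ξ) :=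
      continuous_iff_continuousAt.mpr (fun x => (ha ξ x).differentiableAt.continuousAt)
    have hbcont : Continuous (fun t => b t ξ) :=
      continuous_iff_continuousAt.mpr (fun x => (hb ξ x).differentiableAt.continuousAt)
    have hecont : Continuous (fun x : ℝ => Complex.exp (2 * Real.pi * Complex.I * x * ξ)) := by
      apply Complex.continuous_exp.comp
      fun_prop
    have henegcont : Continuous (fun x : ℝ => Complex.exp (-(2 * Real.pi * Complex.I * x * ξ))) := by
      apply Complex.continuous_exp.comp
      fun_prop
    have hnorme : ∀ x : ℝ, ‖Complex.exp (2 * Real.pi * Complex.I * x * ξ)‖ = 1 := by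
      intro x
      have h : (2 * (Real.pi:ℂ) * Complex.I * x * ξ) = ((2*Real.pi*x*ξ : ℝ) : ℂ) * Complex.I := by
        push_cast; ring
      rw [h, Complex.norm_exp_ofReal_mul_I]
    have hnormeneg : ∀ x : ℝ, ‖Complex.exp (-(2 * Real.pi * Complex.I * x * ξ))‖ = 1 := by
      intro x
      have h : (-(2 * (Real.pi:ℂ) * Complex.I * x * ξ)) = ((-(2*Real.pi*x*ξ) : ℝ) : ℂ) * Complex.I := by
        push_cast; ring
      rw [h, Complex.norm_exp_ofReal_mul_I]
    set Da : ℝ → ℂ := fun x =>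
      (starRingEnd ℂ) (f x) * Complex.exp (2 * Real.pi * Complex.I * x * ξ) * b x ξ with hDa
    set Db : ℝ → ℂ := fun x =>
      f x * Complex.exp (-(2 * Real.pi * Complex.I * x * ξ)) * a x ξ with hDb
    have hDanorm : ∀ x : ℝ, ‖Da x‖ = ‖f x‖ * ‖b x ξ‖ := by
      intro x
      rw [hDa]
      simp only [norm_mul, hnorme, RCLike.norm_conj]
      ring
    have hDbnorm : ∀ x : ℝ, ‖Db x‖ = ‖f x‖ * ‖a x ξ‖ := by
      intro x
      rw [hDb]
      simp only [norm_mul, hnormeneg]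
      ring
    have hDameas : AEStronglyMeasurable Da volume :=
      ((Complex.continuous_conj.comp_aestronglyMeasurable hf.1).mul
        hecont.aestronglyMeasurable).mul hbcont.aestronglyMeasurable
    have hDbmeas : AEStronglyMeasurable Db volume :=
      (hf.1.mul henegcont.aestronglyMeasurable).mul hacont.aestronglyMeasurable
    have hCa := my_bdd hacont (ha0 ξ)
    have hCb := my_bdd hbcont (hb0 ξ)
    obtain ⟨hDaint, harep⟩ := my_rep f hf (fun t => a t ξ) Da 1 (ha ξ) hDameas
      (by
        intro x
        obtain ⟨C, hC0, hCle⟩ := hCb x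
        refine ⟨C, hC0, fun t ht => ?_⟩
        rw [hDanorm t, mul_comm]
        exact mul_le_mul_of_nonneg_right (hCle t ht) (norm_nonneg _)) (ha0 ξ)
    obtain ⟨hDbint, hbrep⟩ := my_rep f hf (fun t => b t ξ) Db 0 (hb ξ) hDbmeas
      (by
        intro x
        obtain ⟨C, hC0, hCle⟩ := hCa x
        refine ⟨C, hC0, fun t ht => ?_⟩
        rw [hDbnorm t, mul_comm]
        exact mul_le_mul_of_nonneg_right (hCle t ht) (norm_nonneg _)) (hb0 ξ)
    -- integrability of weighted products
    have hIM : ∀ (w : ℝ → ℝ), Continuous w → ∀ (x : ℝ) (C : ℝ), (∀ t ≤ x, |w t| ≤ C) →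
        IntegrableOn (fun t => ‖f t‖ * w t) (Set.Iic x) := by
      intro w hw x C hC
      refine Integrable.mono ((hf.norm.const_mul C).integrableOn)
        ((hf.1.norm.mul hw.aestronglyMeasurable).restrict) ?_
      rw [ae_restrict_iff' measurableSet_Iic]
      refine Eventually.of_forall (fun t ht => ?_)
      have h1 : ‖‖f t‖ * w t‖ = ‖f t‖ * |w t| := by
        rw [norm_mul, norm_norm, Real.norm_eq_abs]
      rw [h1]
      calc ‖f t‖ * |w t| ≤ ‖f t‖ * C := mul_le_mul_of_nonneg_left (hC t ht) (norm_nonneg _)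
      _ = C * ‖f t‖ := by ring
      _ ≤ ‖C * ‖f t‖‖ := le_abs_self _
    have hint_fa : ∀ x : ℝ, IntegrableOn (fun t => ‖f t‖ * ‖a t ξ‖) (Set.Iic x) :=
      fun x => ((hDbint x).norm).congr (Eventually.of_forall (fun t => hDbnorm t))
    have hint_fb : ∀ x : ℝ, IntegrableOn (fun t => ‖f t‖ * ‖b t ξ‖) (Set.Iic x) :=
      fun x => ((hDaint x).norm).congr (Eventually.of_forall (fun t => hDanorm t))
    -- basic integral inequalities
    have hbabs : ∀ x : ℝ, ‖b x ξ‖ ≤ ∫ t in Set.Iic x, ‖f t‖ * ‖a t ξ‖ := by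
      intro x
      rw [hbrep x, zero_add]
      calc ‖∫ t in Set.Iic x, Db t‖ ≤ ∫ t in Set.Iic x, ‖Db t‖ :=
        norm_integral_le_integral_norm _
      _ = ∫ t in Set.Iic x, ‖f t‖ * ‖a t ξ‖ :=
        setIntegral_congr_fun measurableSet_Iic (fun t _ => hDbnorm t)
    have haabs : ∀ x : ℝ, ‖a x ξ - 1‖ ≤ ∫ t in Set.Iic x, ‖f t‖ * ‖b t ξ‖ := by
      intro x
      have h : a x ξ - 1 = ∫ t in Set.Iic x, Da t := by rw [harep x]; ring
      rw [h]
      calc ‖∫ t in Set.Iic x, Da t‖ ≤ ∫ t in Set.Iic x, ‖Da t‖ :=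
        norm_integral_le_integral_norm _
      _ = ∫ t in Set.Iic x, ‖f t‖ * ‖b t ξ‖ :=
        setIntegral_congr_fun measurableSet_Iic (fun t _ => hDanorm t)
    -- first Gronwall application
    have part1 : ∀ x : ℝ, ‖b x ξ‖ + ‖a x ξ - 1‖ ≤ Real.exp (∫ t in Set.Iic x, ‖f t‖) - 1 := by
      set u₁ : ℝ → ℝ := fun t => 1 + (‖b t ξ‖ + ‖a t ξ - 1‖) with hu₁
      have hu₁cont : Continuous u₁ := by
        apply continuous_const.add
        exact (hbcont.norm.add (hacont.sub continuous_const).norm)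
      have hu₁int : ∀ x : ℝ, IntegrableOn (fun t => ‖f t‖ * u₁ t) (Set.Iic x) := by
        intro x
        obtain ⟨C1, hC10, hC1⟩ := hCa x
        obtain ⟨C2, hC20, hC2⟩ := hCb x
        refine hIM u₁ hu₁cont x (1 + (C2 + (C1 + 1))) (fun t ht => ?_)
        have h1 : ‖a t ξ - 1‖ ≤ C1 + 1 := le_trans (norm_sub_le _ _) (by
          simpa using add_le_add_right (hC1 t ht) 1)
        have h2 := hC2 t ht
        rw [abs_of_nonneg (by positivity)]
        simp only [hu₁]
        linarith
      have hgr := my_gronwall f hf u₁ (fun t => by positivity) hu₁int ?hule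
      case hule =>
        intro x
        have h1 : ‖b x ξ‖ + ‖a x ξ - 1‖ ≤
            ∫ t in Set.Iic x, (‖f t‖ * ‖a t ξ‖ + ‖f t‖ * ‖b t ξ‖) := by
          rw [integral_add (hint_fa x) (hint_fb x)]
          exact add_le_add (hbabs x) (haabs x)
        have h2 : ∫ t in Set.Iic x, (‖f t‖ * ‖a t ξ‖ + ‖f t‖ * ‖b t ξ‖) ≤
            ∫ t in Set.Iic x, ‖f t‖ * u₁ t := by
          apply setIntegral_mono_on ((hint_fa x).add (hint_fb x)) (hu₁int x) measurableSet_Iic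
          intro t _
          have h3 : ‖a t ξ‖ ≤ 1 + ‖a t ξ - 1‖ := by
            calc ‖a t ξ‖ = ‖(a t ξ - 1) + 1‖ := by ring_nf
            _ ≤ ‖a t ξ - 1‖ + ‖(1:ℂ)‖ := norm_add_le _ _
            _ = 1 + ‖a t ξ - 1‖ := by rw [norm_one]; ring
          simp only [hu₁, Pi.add_apply]
          have h4 := mul_le_mul_of_nonneg_left h3 (norm_nonneg (f t))
          nlinarith [norm_nonneg (f t), norm_nonneg (b t ξ), h4]
        simp only [hu₁]
        linarith
      intro x
      have := hgr x
      simp only [hu₁] at this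
      linarith
    -- second Gronwall application
    have part2 : ∀ x : ℝ, ‖a x ξ‖ + ‖b x ξ‖ ≤ Real.exp (∫ t in Set.Iic x, ‖f t‖) := by
      set u₂ : ℝ → ℝ := fun t => ‖a t ξ‖ + ‖b t ξ‖ with hu₂
      have hu₂cont : Continuous u₂ := hacont.norm.add hbcont.norm
      have hu₂int : ∀ x : ℝ, IntegrableOn (fun t => ‖f t‖ * u₂ t) (Set.Iic x) := by
        intro x
        obtain ⟨C1, hC10, hC1⟩ := hCa x
        obtain ⟨C2, hC20, hC2⟩ := hCb x
        refine hIM u₂ hu₂cont x (C1 + C2) (fun t ht => ?_)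
        rw [abs_of_nonneg (by positivity)]
        exact add_le_add (hC1 t ht) (hC2 t ht)
      have hgr := my_gronwall f hf u₂ (fun t => by positivity) hu₂int ?hule2
      case hule2 =>
        intro x
        have ha' : ‖a x ξ‖ ≤ 1 + ∫ t in Set.Iic x, ‖f t‖ * ‖b t ξ‖ := by
          calc ‖a x ξ‖ = ‖(a x ξ - 1) + 1‖ := by ring_nf
          _ ≤ ‖a x ξ - 1‖ + ‖(1:ℂ)‖ := norm_add_le _ _
          _ = ‖a x ξ - 1‖ + 1 := by rw [norm_one]
          _ ≤ 1 + ∫ t in Set.Iic x, ‖f t‖ * ‖b t ξ‖ := by linarith [haabs x]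
        have h1 : ‖a x ξ‖ + ‖b x ξ‖ ≤
            1 + ∫ t in Set.Iic x, (‖f t‖ * ‖a t ξ‖ + ‖f t‖ * ‖b t ξ‖) := by
          rw [integral_add (hint_fa x) (hint_fb x)]
          have := hbabs x
          linarith
        have h2 : ∫ t in Set.Iic x, (‖f t‖ * ‖a t ξ‖ + ‖f t‖ * ‖b t ξ‖) =
            ∫ t in Set.Iic x, ‖f t‖ * u₂ t := by
          apply setIntegral_congr_fun measurableSet_Iic
          intro t _
          simp only [hu₂]
          ring
        rw [← h2]
        exact h1
      exact fun x => hgr x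
    -- conservation law
    have hcons : ‖A ξ‖^2 - ‖B ξ‖^2 = 1 := by
      set W : ℝ → ℂ := fun t => a t ξ * star (a t ξ) - b t ξ * star (b t ξ) with hW
      have hWd : ∀ x : ℝ, HasDerivAt W 0 x := by
        intro x
        have h1 := (ha ξ x).mul ((ha ξ x).star)
        have h2 := (hb ξ x).mul ((hb ξ x).star)
        have h3 := h1.sub h2
        refine h3.congr_deriv ?_
        have hstar_e : star (Complex.exp (2 * Real.pi * Complex.I * x * ξ)) =
            Complex.exp (-(2 * Real.pi * Complex.I * x * ξ)) := by
          have h : ((starRingEnd ℂ) (2 * Real.pi * Complex.I * x * ξ)) =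
              -(2 * Real.pi * Complex.I * x * ξ) := by
            simp only [map_mul, Complex.conj_I, Complex.conj_ofReal, map_ofNat]
            ring
          rw [Complex.star_def, ← Complex.exp_conj, h]
        have hstar_eneg : star (Complex.exp (-(2 * Real.pi * Complex.I * x * ξ))) =
            Complex.exp (2 * Real.pi * Complex.I * x * ξ) := by
          have h : ((starRingEnd ℂ) (-(2 * Real.pi * Complex.I * x * ξ))) =
              (2 * Real.pi * Complex.I * x * ξ) := by
            simp only [map_neg, map_mul, Complex.conj_I, Complex.conj_ofReal, map_ofNat]
            ring
          rw [Complex.star_def, ← Complex.exp_conj, h]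
        simp only [star_mul, hstar_e, hstar_eneg]
        have hsc : star ((starRingEnd ℂ) (f x)) = f x := by
          simp [Complex.star_def]
        rw [hsc]
        simp only [Complex.star_def]
        ring
      have hWc : ∀ x y : ℝ, W x = W y :=
        fun x y => is_const_of_deriv_eq_zero (fun z => (hWd z).differentiableAt)
          (fun z => (hWd z).deriv) x y
      have hWbot : Tendsto W atBot (nhds 1) := by
        have := ((ha0 ξ).mul ((ha0 ξ).star)).sub ((hb0 ξ).mul ((hb0 ξ).star))
        simpa [hW] using this
      have hWtop : Tendsto W atTop (nhds (A ξ * star (A ξ) - B ξ * star (B ξ))) :=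
        ((haA ξ).mul ((haA ξ).star)).sub ((hbB ξ).mul ((hbB ξ).star))
      have hWconstbot : Tendsto W atBot (nhds (W 0)) := by
        have : W = fun _ => W 0 := funext (fun x => hWc x 0)
        rw [this]; exact tendsto_const_nhds
      have hWconsttop : Tendsto W atTop (nhds (W 0)) := by
        have : W = fun _ => W 0 := funext (fun x => hWc x 0)
        rw [this]; exact tendsto_const_nhds
      have h1 : W 0 = 1 := tendsto_nhds_unique hWconstbot hWbot
      have h2 : A ξ * star (A ξ) - B ξ * star (B ξ) = 1 := by
        rw [← h1]
        exact tendsto_nhds_unique hWtop hWconsttop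
      have h3 : A ξ * star (A ξ) = ((‖A ξ‖)^2 : ℝ) := by
        rw [Complex.star_def, Complex.mul_conj, Complex.sq_norm]
      have h4 : B ξ * star (B ξ) = ((‖B ξ‖)^2 : ℝ) := by
        rw [Complex.star_def, Complex.mul_conj, Complex.sq_norm]
      rw [h3, h4] at h2
      have h5 := congrArg Complex.re h2
      simp only [Complex.sub_re, Complex.ofReal_re, Complex.one_re] at h5
      simpa using h5
    refine ⟨part1, ?_, hcons⟩
    have hlim : Tendsto (fun x => ‖a x ξ‖ + ‖b x ξ‖) atTop (nhds (‖A ξ‖ + ‖B ξ‖)) :=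
      ((haA ξ).norm).add ((hbB ξ).norm)
    refine le_of_tendsto hlim (Eventually.of_forall (fun x => ?_))
    calc ‖a x ξ‖ + ‖b x ξ‖ ≤ Real.exp (∫ t in Set.Iic x, ‖f t‖) := part2 x
    _ ≤ Real.exp N := Real.exp_le_exp.mpr (hFleN x)
  -- assemble
  refine ⟨?_, ?_, ?_, ?_⟩
  · intro x ξ
    have := (key ξ).1 x
    simpa using this
  · intro ξ
    have hlim : Tendsto (fun x => ‖b x ξ‖) atTop (nhds (‖B ξ‖)) := (hbB ξ).norm
    have h1 : ‖B ξ‖ ≤ Real.exp N - 1 := by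
      refine le_of_tendsto hlim (Eventually.of_forall (fun x => ?_))
      have h2 := (key ξ).1 x
      have h3 : Real.exp (∫ t in Set.Iic x, ‖f t‖) ≤ Real.exp N :=
        Real.exp_le_exp.mpr (hFleN x)
      have h4 : (0:ℝ) ≤ ‖a x ξ - 1‖ := norm_nonneg _
      linarith
    simpa using h1
  · intro ξ
    obtain ⟨_, hs, hc⟩ := key ξ
    have hA1 : 1 ≤ ‖A ξ‖ := by nlinarith [norm_nonneg (A ξ), norm_nonneg (B ξ), sq_nonneg (‖B ξ‖)]
    have hspos : (0:ℝ) < ‖A ξ‖ + ‖B ξ‖ := by nlinarith [norm_nonneg (B ξ)]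
    rw [Real.log_le_iff_le_exp hspos]
    exact hs
  · intro ξ
    obtain ⟨_, hs, hc⟩ := key ξ
    have hA1 : 1 ≤ ‖A ξ‖ := by nlinarith [norm_nonneg (A ξ), norm_nonneg (B ξ)]
    have hB0 : 0 ≤ ‖B ξ‖ := norm_nonneg _
    set s := ‖A ξ‖ + ‖B ξ‖ with hsdef
    have hs1 : 1 ≤ s := by rw [hsdef]; linarith
    have hspos : 0 < s := by linarith
    have hprod : s * (‖A ξ‖ - ‖B ξ‖) = 1 := by rw [hsdef]; linear_combination hc
    have h2A : 2 * ‖A ξ‖ = s + 1/s := by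
      field_simp
      linear_combination hprod
    have hEs : s ≤ Real.exp N := hs
    have hE1 : 1 ≤ Real.exp N := Real.one_le_exp hN0
    have hsum : s + 1/s ≤ Real.exp N + Real.exp (-N) := by
      have hEpos : 0 < Real.exp N := Real.exp_pos N
      have hiS : 1/s ≤ 1 := by rw [div_le_one hspos]; exact hs1
      have hiE : 1/(Real.exp N) ≤ 1 := by rw [div_le_one hEpos]; exact hE1
      have hiS0 : (0:ℝ) < 1/s := by positivity
      have hiE0 : (0:ℝ) < 1/(Real.exp N) := by positivity
      have hfact : (Real.exp N - s) * (1 - (1/s)*(1/Real.exp N)) ≥ 0 :=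
        mul_nonneg (by linarith) (by nlinarith)
      have hlink : (Real.exp N - s) * ((1/s)*(1/Real.exp N)) = 1/s - 1/Real.exp N := by
        field_simp
      rw [Real.exp_neg, inv_eq_one_div]
      nlinarith [hfact, hlink]
    have hcosh : ‖A ξ‖ ≤ Real.cosh N := by
      rw [Real.cosh_eq]
      linarith
    have hcoshe := my_cosh_le hN0
    have hAle : ‖A ξ‖ ≤ Real.exp (N^2/2) := le_trans hcosh hcoshe
    have hsq : ‖A ξ‖^2 ≤ Real.exp (N^2) := by
      have h1 : ‖A ξ‖^2 ≤ (Real.exp (N^2/2))^2 := by nlinarith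
      have h2 : (Real.exp (N^2/2))^2 = Real.exp (N^2) := by
        rw [sq, ← Real.exp_add]
        congr 1
        ring
      rw [h2] at h1
      exact h1
    have hlog : Real.log (‖A ξ‖^2) ≤ N^2 := by
      rw [Real.log_le_iff_le_exp (by positivity)]
      exact hsq
    calc Real.sqrt (Real.log (‖A ξ‖^2)) ≤ Real.sqrt (N^2) := Real.sqrt_le_sqrt hlog
    _ = N := Real.sqrt_sq hN0
end

section
/- Define the quadrilinear operator Φ(f₁,f₂,f₃,f₄)(ξ) = Re ∫_{(x₁∧x₂)>(x₃∨x₄)} f₁(x₁)f₂(x₂)·conj(f₃(x₃)f₄(x₄))·e^{2πi(−x₁−x₂+x₃+x₄)ξ} dx₁dx₂dx₃dx₄ for integrable f₁,…,f₄. Then for every ξ: |Φ(f₁,f₂,f₃,f₄)(ξ)| ≤ min( ‖f₁‖_{L^1}‖f₂‖_{L^1}·(𝓕_* f₃)(ξ)(𝓕_* f₄)(ξ), ‖f₃‖_{L^1}‖f₄‖_{L^1}·(𝓕_* f₁)(ξ)(𝓕_* f₂)(ξ) ). -/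
open MeasureTheory

/-- The maximally truncated Fourier transform. -/
noncomputable def Fstar (f : ℝ → ℂ) (ξ : ℝ) : ℝ :=
  sSup {r : ℝ | ∃ I : Set ℝ, I.OrdConnected ∧
    r = ‖∫ x in I, f x * Complex.exp (-(2 * Real.pi * Complex.I * x * ξ))‖}

/-- The quadrilinear operator `Φ`. -/
noncomputable def Phi (f₁ f₂ f₃ f₄ : ℝ → ℂ) (ξ : ℝ) : ℝ :=
  (∫ x in {x : ℝ × ℝ × ℝ × ℝ | max x.2.2.1 x.2.2.2 < min x.1 x.2.1},
    f₁ x.1 * f₂ x.2.1 * (starRingEnd ℂ) (f₃ x.2.2.1 * f₄ x.2.2.2) *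
      Complex.exp (2 * Real.pi * Complex.I * (-x.1 - x.2.1 + x.2.2.1 + x.2.2.2) * ξ)).re

/-!
Writing `gᵢ(x) = fᵢ(x) e^{-2πixξ}`, the integrand of `Φ` is `g₁(a) g₂(b) · conj (g₃(c) g₄(d))`,
so `Φ` is the real part of an integral of a product `F(a, b) G(c, d)` over the region
`max c d < min a b`. Integrating first in `(c, d)`, whose slice is the square `(-∞, min a b)²`,
leaves `∫ F(a, b) · conj (∫_{-∞}^{m} g₃ · ∫_{-∞}^{m} g₄)` with `m = min a b`, which is bounded
by `‖f₁‖₁ ‖f₂‖₁ 𝓕_* f₃ 𝓕_* f₄`.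
Integrating first in `(a, b)`, whose slice is `(max c d, ∞)²`, gives the other bound.
-/

open Set

section SliceBound

variable {α β 𝕜 : Type*} [MeasurableSpace α] [MeasurableSpace β] [RCLike 𝕜]
  {μ : Measure α} {ν : Measure β} [SFinite μ] [SFinite ν]
  {F : α → 𝕜} {G : β → 𝕜} {s : Set (α × β)} {C : ℝ}

theorem norm_setIntegral_mul_le_of_slice_snd_le (hF : Integrable F μ)
    (hG : Integrable G ν) (hs : MeasurableSet s)
    (hC : ∀ a, ‖∫ b in Prod.mk a ⁻¹' s, G b ∂ν‖ ≤ C) :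
    ‖∫ p in s, F p.1 * G p.2 ∂μ.prod ν‖ ≤ (∫ a, ‖F a‖ ∂μ) * C := by
  have hfubini : ∫ p in s, F p.1 * G p.2 ∂μ.prod ν =
      ∫ a, F a * ∫ b in Prod.mk a ⁻¹' s, G b ∂ν ∂μ := by
    rw [← integral_indicator hs, integral_prod _ ((hF.mul_prod hG).indicator hs)]
    congr with a
    rw [← integral_const_mul, ← integral_indicator (measurable_prodMk_left hs)]
    rfl
  calc ‖∫ p in s, F p.1 * G p.2 ∂μ.prod ν‖
      ≤ ∫ a, ‖F a * ∫ b in Prod.mk a ⁻¹' s, G b ∂ν‖ ∂μ := by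
        rw [hfubini]; exact norm_integral_le_integral_norm _
    _ ≤ ∫ a, ‖F a‖ * C ∂μ := by
        refine integral_mono_of_nonneg (ae_of_all _ fun _ => norm_nonneg _)
          (hF.norm.mul_const C) (ae_of_all _ fun a => ?_)
        dsimp only
        rw [norm_mul]
        exact mul_le_mul_of_nonneg_left (hC a) (norm_nonneg _)
    _ = (∫ a, ‖F a‖ ∂μ) * C := integral_mul_const C _

theorem norm_setIntegral_mul_le_of_slice_fst_le (hF : Integrable F μ)
    (hG : Integrable G ν) (hs : MeasurableSet s)
    (hC : ∀ b, ‖∫ a in (·, b) ⁻¹' s, F a ∂μ‖ ≤ C) :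
    ‖∫ p in s, F p.1 * G p.2 ∂μ.prod ν‖ ≤ (∫ b, ‖G b‖ ∂ν) * C := by
  have hswap : ∫ p in s, F p.1 * G p.2 ∂μ.prod ν =
      ∫ q in Prod.swap ⁻¹' s, G q.1 * F q.2 ∂ν.prod μ := by
    rw [← integral_indicator hs, ← integral_indicator (hs.preimage measurable_swap),
      ← integral_prod_swap]
    congr with q
    by_cases hq : q.swap ∈ s <;> simp [indicator, hq, mul_comm]
  rw [hswap]
  exact norm_setIntegral_mul_le_of_slice_snd_le hG hF
    (hs.preimage measurable_swap) hC

end SliceBound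

theorem MeasureTheory.Integrable.conj {α 𝕜 : Type*} [MeasurableSpace α] [RCLike 𝕜]
    {μ : Measure α} {f : α → 𝕜} (hf : Integrable f μ) :
    Integrable (fun x => starRingEnd 𝕜 (f x)) μ :=
  RCLike.conjCLE.toContinuousLinearMap.integrable_comp hf

def maxLtMin : Set ((ℝ × ℝ) × (ℝ × ℝ)) := {p | max p.2.1 p.2.2 < min p.1.1 p.1.2}

theorem measurableSet_maxLtMin : MeasurableSet maxLtMin :=
  measurableSet_lt (by fun_prop) (by fun_prop)

theorem preimage_prodMk_maxLtMin (ab : ℝ × ℝ) :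
    Prod.mk ab ⁻¹' maxLtMin = Iio (min ab.1 ab.2) ×ˢ Iio (min ab.1 ab.2) := by
  ext; simp [maxLtMin, and_and_and_comm]

theorem preimage_prodMk_right_maxLtMin (cd : ℝ × ℝ) :
    (·, cd) ⁻¹' maxLtMin = Ioi (max cd.1 cd.2) ×ˢ Ioi (max cd.1 cd.2) := by
  ext; simp [maxLtMin]

theorem integral_norm_mul_prod {𝕜 : Type*} [RCLike 𝕜] (u v : ℝ → 𝕜) :
    ∫ p : ℝ × ℝ, ‖u p.1 * v p.2‖ = (∫ x, ‖u x‖) * ∫ x, ‖v x‖ := by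
  simp_rw [norm_mul]
  exact integral_prod_mul (fun x => ‖u x‖) (fun x => ‖v x‖)

section MaxLtMin

variable {u v w z : ℝ → ℂ} {C D : ℝ}

theorem norm_setIntegral_maxLtMin_le_of_Iio (hu : Integrable u)
    (hv : Integrable v) (hw : Integrable w) (hz : Integrable z)
    (hwC : ∀ m, ‖∫ x in Iio m, w x‖ ≤ C) (hzD : ∀ m, ‖∫ x in Iio m, z x‖ ≤ D) :
    ‖∫ p in maxLtMin, u p.1.1 * v p.1.2 * (w p.2.1 * z p.2.2)‖ ≤
      (∫ x, ‖u x‖) * (∫ x, ‖v x‖) * (C * D) := by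
  rw [← integral_norm_mul_prod]
  refine norm_setIntegral_mul_le_of_slice_snd_le (hu.mul_prod hv)
    (hw.mul_prod hz) measurableSet_maxLtMin fun ab => ?_
  rw [preimage_prodMk_maxLtMin, setIntegral_prod_mul, norm_mul]
  exact mul_le_mul (hwC _) (hzD _) (norm_nonneg _) ((norm_nonneg _).trans (hwC 0))

theorem norm_setIntegral_maxLtMin_le_of_Ioi (hu : Integrable u)
    (hv : Integrable v) (hw : Integrable w) (hz : Integrable z)
    (huC : ∀ m, ‖∫ x in Ioi m, u x‖ ≤ C) (hvD : ∀ m, ‖∫ x in Ioi m, v x‖ ≤ D) :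
    ‖∫ p in maxLtMin, u p.1.1 * v p.1.2 * (w p.2.1 * z p.2.2)‖ ≤
      (∫ x, ‖w x‖) * (∫ x, ‖z x‖) * (C * D) := by
  rw [← integral_norm_mul_prod]
  refine norm_setIntegral_mul_le_of_slice_fst_le (hu.mul_prod hv)
    (hw.mul_prod hz) measurableSet_maxLtMin fun cd => ?_
  rw [preimage_prodMk_right_maxLtMin, setIntegral_prod_mul, norm_mul]
  exact mul_le_mul (huC _) (hvD _) (norm_nonneg _) ((norm_nonneg _).trans (huC 0))

end MaxLtMin

noncomputable def modulate (ξ : ℝ) (f : ℝ → ℂ) (x : ℝ) : ℂ :=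
  f x * Complex.exp (-(2 * Real.pi * Complex.I * x * ξ))

section Modulate

variable {f : ℝ → ℂ} {ξ : ℝ}

theorem norm_modulate (x : ℝ) : ‖modulate ξ f x‖ = ‖f x‖ := by
  simp [modulate, Complex.norm_exp]

theorem integral_norm_modulate : ∫ x, ‖modulate ξ f x‖ = ∫ x, ‖f x‖ := by
  simp_rw [norm_modulate]

theorem MeasureTheory.Integrable.modulate (hf : Integrable f) (ξ : ℝ) :
    Integrable (modulate ξ f) :=
  hf.norm.mono' (hf.1.mul (by fun_prop : Continuous _).aestronglyMeasurable)
    (ae_of_all _ fun x => (norm_modulate x).le)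

theorem norm_setIntegral_modulate_le_Fstar (hf : Integrable f) {I : Set ℝ}
    (hI : I.OrdConnected) : ‖∫ x in I, modulate ξ f x‖ ≤ Fstar f ξ := by
  refine le_csSup ⟨∫ x, ‖f x‖, ?_⟩ ⟨I, hI, rfl⟩
  rintro _ ⟨J, -, rfl⟩
  calc ‖∫ x in J, modulate ξ f x‖ ≤ ∫ x in J, ‖modulate ξ f x‖ :=
        norm_integral_le_integral_norm _
    _ ≤ ∫ x, ‖modulate ξ f x‖ :=
        setIntegral_le_integral (hf.modulate ξ).norm (ae_of_all _ fun _ => norm_nonneg _)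
    _ = ∫ x, ‖f x‖ := integral_norm_modulate

end Modulate

theorem Phi_eq_re_setIntegral_maxLtMin (f₁ f₂ f₃ f₄ : ℝ → ℂ) (ξ : ℝ) :
    Phi f₁ f₂ f₃ f₄ ξ = (∫ p in maxLtMin, modulate ξ f₁ p.1.1 * modulate ξ f₂ p.1.2 *
      (starRingEnd ℂ (modulate ξ f₃ p.2.1) * starRingEnd ℂ (modulate ξ f₄ p.2.2))).re := by
  rw [Phi, ← volume_preserving_prodAssoc.setIntegral_preimage_emb
    MeasurableEquiv.prodAssoc.measurableEmbedding]
  congr 1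
  refine setIntegral_congr_fun measurableSet_maxLtMin fun ⟨⟨a, b⟩, ⟨c, d⟩⟩ _ => ?_
  have hexp : Complex.exp (2 * Real.pi * Complex.I * (-a - b + c + d) * ξ) =
      Complex.exp (-(2 * Real.pi * Complex.I * a * ξ)) *
        Complex.exp (-(2 * Real.pi * Complex.I * b * ξ)) *
        starRingEnd ℂ (Complex.exp (-(2 * Real.pi * Complex.I * c * ξ))) *
        starRingEnd ℂ (Complex.exp (-(2 * Real.pi * Complex.I * d * ξ))) := by
    simp only [← Complex.exp_conj, ← Complex.exp_add, map_neg, map_mul, Complex.conj_I,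
      Complex.conj_ofReal, map_ofNat]
    ring_nf
  simp only [MeasurableEquiv.prodAssoc, Equiv.prodAssoc, MeasurableEquiv.coe_mk,
    Equiv.coe_fn_mk, hexp, modulate, map_mul]
  ring

theorem stmt_16 (f₁ f₂ f₃ f₄ : ℝ → ℂ)
    (h₁ : Integrable f₁) (h₂ : Integrable f₂) (h₃ : Integrable f₃) (h₄ : Integrable f₄) :
    ∀ ξ : ℝ, |Phi f₁ f₂ f₃ f₄ ξ| ≤
      min ((∫ x : ℝ, ‖f₁ x‖) * (∫ x : ℝ, ‖f₂ x‖) * (Fstar f₃ ξ * Fstar f₄ ξ))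
        ((∫ x : ℝ, ‖f₃ x‖) * (∫ x : ℝ, ‖f₄ x‖) * (Fstar f₁ ξ * Fstar f₂ ξ)) := by
  intro ξ
  have hconj_le_Fstar {f : ℝ → ℂ} (hf : Integrable f) (m : ℝ) :
      ‖∫ x in Iio m, starRingEnd ℂ (modulate ξ f x)‖ ≤ Fstar f ξ := by
    rw [integral_conj, RCLike.norm_conj]
    exact norm_setIntegral_modulate_le_Fstar hf ordConnected_Iio
  rw [Phi_eq_re_setIntegral_maxLtMin]
  refine le_min ((Complex.abs_re_le_norm _).trans ?_) ((Complex.abs_re_le_norm _).trans ?_)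
  · simpa only [integral_norm_modulate] using
      norm_setIntegral_maxLtMin_le_of_Iio (h₁.modulate ξ) (h₂.modulate ξ)
        (h₃.modulate ξ).conj (h₄.modulate ξ).conj (hconj_le_Fstar h₃) (hconj_le_Fstar h₄)
  · simpa only [RCLike.norm_conj, integral_norm_modulate] using
      norm_setIntegral_maxLtMin_le_of_Ioi (h₁.modulate ξ) (h₂.modulate ξ)
        (h₃.modulate ξ).conj (h₄.modulate ξ).conj
        (fun _ => norm_setIntegral_modulate_le_Fstar h₁ ordConnected_Ioi)
        (fun _ => norm_setIntegral_modulate_le_Fstar h₂ ordConnected_Ioi)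
end

section
/- Let f ∈ L^1(ℝ) be compactly supported with Dirac scattering data a(ξ), b(ξ), and reflection coefficient r(x,ξ) = b(x,ξ)/a(x,ξ). Then for every ξ with a(ξ) ≠ 0: log(|a(ξ)|²) = 2·Re ∫_ℝ f(x)·e^{−2πi xξ}·conj(r(x,ξ)) dx. -/
/-!
With `q x = f x * exp (-2πixξ)` the system reads `a' = conj q * b`, `b' = q * a`. Along it
`‖a‖² - ‖b‖²` is constant, hence equal to `1`; so `a` never vanishes and `|b / a| ≤ 1`, which makes
`q * conj (b / a)` integrable. Differentiating, `(log ‖a‖²)' = 2 Re (q * conj (b / a))`, and the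
fundamental theorem of calculus on `ℝ` between the limits `log 1 = 0` at `-∞` and `log ‖A‖²` at
`+∞` gives the identity.
-/

open MeasureTheory Filter Topology ComplexConjugate

section DiracSystem

variable {q a b : ℝ → ℂ}

lemma hasDerivAt_sq_norm_sub_sq_norm (ha : ∀ x, HasDerivAt a (conj (q x) * b x) x)
    (hb : ∀ x, HasDerivAt b (q x * a x) x) (x : ℝ) :
    HasDerivAt (fun t => ‖a t‖ ^ 2 - ‖b t‖ ^ 2) 0 x := by
  refine ((ha x).norm_sq.sub (hb x).norm_sq).congr_deriv ?_
  rw [Complex.inner, Complex.inner, ← Complex.conj_re (q x * a x * conj (b x))]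
  simp only [map_mul, Complex.conj_conj]
  ring_nf

lemma sq_norm_sub_sq_norm_eq_one (ha : ∀ x, HasDerivAt a (conj (q x) * b x) x)
    (hb : ∀ x, HasDerivAt b (q x * a x) x) (ha0 : Tendsto a atBot (𝓝 1))
    (hb0 : Tendsto b atBot (𝓝 0)) (x : ℝ) : ‖a x‖ ^ 2 - ‖b x‖ ^ 2 = 1 := by
  have hderiv := hasDerivAt_sq_norm_sub_sq_norm ha hb
  have hconst : ∀ t, ‖a t‖ ^ 2 - ‖b t‖ ^ 2 = ‖a x‖ ^ 2 - ‖b x‖ ^ 2 := fun t =>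
    is_const_of_deriv_eq_zero (fun t => (hderiv t).differentiableAt) (fun t => (hderiv t).deriv) t x
  have hlim : Tendsto (fun t => ‖a t‖ ^ 2 - ‖b t‖ ^ 2) atBot (𝓝 (‖(1 : ℂ)‖ ^ 2 - ‖(0 : ℂ)‖ ^ 2)) :=
    (ha0.norm.pow 2).sub (hb0.norm.pow 2)
  simp only [hconst, norm_one, norm_zero] at hlim
  simpa using tendsto_nhds_unique tendsto_const_nhds hlim

lemma ne_zero_and_norm_div_le_one (ha : ∀ x, HasDerivAt a (conj (q x) * b x) x)
    (hb : ∀ x, HasDerivAt b (q x * a x) x) (ha0 : Tendsto a atBot (𝓝 1))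
    (hb0 : Tendsto b atBot (𝓝 0)) (x : ℝ) : a x ≠ 0 ∧ ‖b x / a x‖ ≤ 1 := by
  have h := sq_norm_sub_sq_norm_eq_one ha hb ha0 hb0 x
  have hpos : 0 < ‖a x‖ := by nlinarith [norm_nonneg (a x), norm_nonneg (b x)]
  refine ⟨norm_pos_iff.1 hpos, ?_⟩
  rw [norm_div, div_le_one hpos]
  nlinarith [norm_nonneg (a x), norm_nonneg (b x)]

lemma hasDerivAt_log_sq_norm {x : ℝ} (ha : HasDerivAt a (conj (q x) * b x) x) (hx : a x ≠ 0) :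
    HasDerivAt (fun t => Real.log (‖a t‖ ^ 2)) (2 * (q x * conj (b x / a x)).re) x := by
  refine (ha.norm_sq.log (by positivity)).congr_deriv ?_
  have hconj : conj (b x / a x) = conj (b x) * a x / ((‖a x‖ ^ 2 : ℝ) : ℂ) := by
    have : conj (a x) ≠ 0 := (map_ne_zero _).2 hx
    rw [map_div₀, Complex.ofReal_pow, ← Complex.mul_conj']
    field_simp
  rw [hconj, ← mul_div_assoc, Complex.div_ofReal_re, Complex.inner, ← Complex.conj_re]
  simp only [map_mul, Complex.conj_conj]
  ring_nf

lemma integrable_mul_conj_div (hq : Integrable q) (ha : ∀ x, HasDerivAt a (conj (q x) * b x) x)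
    (hb : ∀ x, HasDerivAt b (q x * a x) x) (ha0 : Tendsto a atBot (𝓝 1))
    (hb0 : Tendsto b atBot (𝓝 0)) : Integrable (fun x => q x * conj (b x / a x)) := by
  have hbound := ne_zero_and_norm_div_le_one ha hb ha0 hb0
  have hcont : Continuous fun x => conj (b x / a x) :=
    Complex.continuous_conj.comp <| (continuous_iff_continuousAt.2 fun x => (hb x).continuousAt).div
      (continuous_iff_continuousAt.2 fun x => (ha x).continuousAt) fun x => (hbound x).1
  exact hq.mul_bdd hcont.aestronglyMeasurable
    (Eventually.of_forall fun x => by simpa using (hbound x).2)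

theorem log_sq_norm_eq_two_mul_re_integral (hq : Integrable q)
    (ha : ∀ x, HasDerivAt a (conj (q x) * b x) x) (hb : ∀ x, HasDerivAt b (q x * a x) x)
    (ha0 : Tendsto a atBot (𝓝 1)) (hb0 : Tendsto b atBot (𝓝 0)) {A : ℂ}
    (haA : Tendsto a atTop (𝓝 A)) (hA : A ≠ 0) :
    Real.log (‖A‖ ^ 2) = 2 * (∫ x, q x * conj (b x / a x)).re := by
  have hint := integrable_mul_conj_div hq ha hb ha0 hb0
  have hftc := integral_of_hasDerivAt_of_tendsto
    (fun x => hasDerivAt_log_sq_norm (ha x) (ne_zero_and_norm_div_le_one ha hb ha0 hb0 x).1)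
    (hint.re.const_mul 2)
    ((ha0.norm.pow 2).log (by simp))
    ((haA.norm.pow 2).log (by positivity))
  have hre : ∫ x, (q x * conj (b x / a x)).re = (∫ x, q x * conj (b x / a x)).re :=
    integral_re hint
  rw [integral_const_mul, hre] at hftc
  simpa using hftc.symm

end DiracSystem

lemma conj_exp_neg_mul_I (x ξ : ℝ) :
    conj (Complex.exp (-(2 * Real.pi * Complex.I * x * ξ))) =
      Complex.exp (2 * Real.pi * Complex.I * x * ξ) := by
  rw [← Complex.exp_conj]
  simp [map_ofNat]

lemma norm_exp_neg_mul_I (x ξ : ℝ) : ‖Complex.exp (-(2 * Real.pi * Complex.I * x * ξ))‖ = 1 := by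
  rw [Complex.norm_exp]
  simp

theorem stmt_18_general (f : ℝ → ℂ) (a b : ℝ → ℝ → ℂ) (A : ℝ → ℂ)
    (hf : Integrable f)
    (ha : ∀ ξ x : ℝ, HasDerivAt (fun t => a t ξ)
      ((starRingEnd ℂ) (f x) * Complex.exp (2 * Real.pi * Complex.I * x * ξ) * b x ξ) x)
    (hb : ∀ ξ x : ℝ, HasDerivAt (fun t => b t ξ)
      (f x * Complex.exp (-(2 * Real.pi * Complex.I * x * ξ)) * a x ξ) x)
    (ha0 : ∀ ξ : ℝ, Tendsto (fun t => a t ξ) atBot (nhds 1))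
    (hb0 : ∀ ξ : ℝ, Tendsto (fun t => b t ξ) atBot (nhds 0))
    (haA : ∀ ξ : ℝ, Tendsto (fun t => a t ξ) atTop (nhds (A ξ))) :
    ∀ ξ : ℝ, A ξ ≠ 0 →
      Real.log (‖A ξ‖ ^ 2) =
        2 * (∫ x : ℝ, f x * Complex.exp (-(2 * Real.pi * Complex.I * x * ξ)) *
          (starRingEnd ℂ) (b x ξ / a x ξ)).re := by
  intro ξ hA
  set q : ℝ → ℂ := fun x => f x * Complex.exp (-(2 * Real.pi * Complex.I * x * ξ))
  have hq : Integrable q :=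
    hf.mul_bdd (c := 1) (by fun_prop) (Eventually.of_forall fun x => (norm_exp_neg_mul_I x ξ).le)
  have ha' : ∀ x, HasDerivAt (fun t => a t ξ) (conj (q x) * b x ξ) x := fun x => by
    simpa only [q, map_mul, conj_exp_neg_mul_I] using ha ξ x
  exact log_sq_norm_eq_two_mul_re_integral hq ha' (hb ξ) (ha0 ξ) (hb0 ξ) (haA ξ) hA

theorem stmt_18 (f : ℝ → ℂ) (a b : ℝ → ℝ → ℂ) (A : ℝ → ℂ)
    (hf : Integrable f) (hsupp : HasCompactSupport f)
    (ha : ∀ ξ x : ℝ, HasDerivAt (fun t => a t ξ)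
      ((starRingEnd ℂ) (f x) * Complex.exp (2 * Real.pi * Complex.I * x * ξ) * b x ξ) x)
    (hb : ∀ ξ x : ℝ, HasDerivAt (fun t => b t ξ)
      (f x * Complex.exp (-(2 * Real.pi * Complex.I * x * ξ)) * a x ξ) x)
    (ha0 : ∀ ξ : ℝ, Tendsto (fun t => a t ξ) atBot (nhds 1))
    (hb0 : ∀ ξ : ℝ, Tendsto (fun t => b t ξ) atBot (nhds 0))
    (haA : ∀ ξ : ℝ, Tendsto (fun t => a t ξ) atTop (nhds (A ξ))) :
    ∀ ξ : ℝ, A ξ ≠ 0 →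
      Real.log (‖A ξ‖ ^ 2) =
        2 * (∫ x : ℝ, f x * Complex.exp (-(2 * Real.pi * Complex.I * x * ξ)) *
          (starRingEnd ℂ) (b x ξ / a x ξ)).re :=
  stmt_18_general f a b A hf ha hb ha0 hb0 haA
end
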